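/- arXiv:2408.07658 — 2 statements merged into one kernel-verified Lean document; each statement's English description precedes it below -/
import Mathlib

section
/- Let I, J ⊆ ℝ₊ be nonempty intervals with inf(I·I^{-1}) ≤ inf(J·J^{-1}), and let n ≥ 2. Then Γ_n(I) ⊆ Γ_n(J). In particular if J ⊆ I then Γ_n(I) ⊆ Γ_n(J). -/
open Real Finset Pointwise

noncomputable def gini (p q : ℝ) {n : ℕ} (x : Fin n → ℝ) : ℝ :=
  if p = q then Real.exp ((∑ i, x i ^ p * Real.log (x i)) / ∑ i, x i ^ p)
  else ((∑ i, x i ^ p) / ∑ i, x i ^ q) ^ (1 / (p - q))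
def Gamma (n : ℕ) (I : Set ℝ) : Set ((ℝ × ℝ) × (ℝ × ℝ)) :=
  {w | ∀ x : Fin n → ℝ, (∀ i, x i ∈ I) → gini w.1.1 w.1.2 x ≤ gini w.2.1 w.2.2 x}

/-! Gini means are homogeneous and continuous. A tuple `x` with entries in
`[m, M]`, `m ≤ M`, can be rescaled into the interval `I` as soon as `a / b ≤ m / M` for some
`a, b ∈ I`; this is the case whenever `m / M > inf (I·I⁻¹)`. The ratio `min x / max x` of a tuple
from `J` is at least `inf (J·J⁻¹) ≥ inf (I·I⁻¹)`, and if equality holds for a non-constant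
tuple, adding a small `ε > 0` to all entries makes it strict, so the
inequality passes to `x` in the limit `ε → 0`. -/

open Topology Filter

lemma Set.OrdConnected.div_mul_mem {I : Set ℝ} (hI : I.OrdConnected) {a b m M t : ℝ}
    (ha : a ∈ I) (hb : b ∈ I) (hb0 : 0 < b) (hM : 0 < M) (hab : a * M ≤ b * m)
    (hmt : m ≤ t) (htM : t ≤ M) : b / M * t ∈ I := by
  refine hI.out ha hb ⟨?_, ?_⟩
  · rw [div_mul_eq_mul_div, le_div_iff₀ hM]
    nlinarith
  · rw [div_mul_eq_mul_div, div_le_iff₀ hM]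
    nlinarith

section Gini

variable {n : ℕ} [Nonempty (Fin n)]

lemma sum_rpow_pos {x : Fin n → ℝ} (hx : ∀ i, 0 < x i) (p : ℝ) : 0 < ∑ i, x i ^ p :=
  sum_pos (fun i _ => rpow_pos_of_pos (hx i) p) univ_nonempty

lemma gini_smul (p q : ℝ) {c : ℝ} (hc : 0 < c) {x : Fin n → ℝ} (hx : ∀ i, 0 < x i) :
    gini p q (c • x) = c * gini p q x := by
  have hS := sum_rpow_pos hx
  have hsum (r : ℝ) : ∑ i, (c * x i) ^ r = c ^ r * ∑ i, x i ^ r := by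
    rw [mul_sum]
    exact sum_congr rfl fun i _ => mul_rpow hc.le (hx i).le
  simp only [gini, Pi.smul_apply, smul_eq_mul, hsum]
  split_ifs with hpq
  · subst hpq
    have hlog : ∑ i, (c * x i) ^ p * log (c * x i)
        = c ^ p * (log c * ∑ i, x i ^ p + ∑ i, x i ^ p * log (x i)) := by
      calc ∑ i, (c * x i) ^ p * log (c * x i)
          = ∑ i, c ^ p * (log c * x i ^ p + x i ^ p * log (x i)) := sum_congr rfl fun i _ => by
            rw [mul_rpow hc.le (hx i).le, log_mul hc.ne' (hx i).ne']
            ring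
        _ = _ := by rw [← mul_sum, sum_add_distrib, ← mul_sum]
    rw [hlog, mul_div_mul_left _ _ (rpow_pos_of_pos hc p).ne', add_div,
      mul_div_cancel_right₀ _ (hS p).ne', exp_add, exp_log hc]
  · rw [mul_div_mul_comm, ← rpow_sub hc, mul_rpow (rpow_pos_of_pos hc _).le
      (div_pos (hS p) (hS q)).le, ← rpow_mul hc.le, mul_one_div_cancel (sub_ne_zero.mpr hpq),
      rpow_one]

lemma continuousAt_gini (p q : ℝ) {x : Fin n → ℝ} (hx : ∀ i, 0 < x i) :
    ContinuousAt (gini p q) x := by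
  have hS := sum_rpow_pos hx
  have happ (i : Fin n) : ContinuousAt (fun y : Fin n → ℝ => y i) x :=
    (continuous_apply i).continuousAt
  have hsum (r : ℝ) : ContinuousAt (fun y : Fin n → ℝ => ∑ i, y i ^ r) x :=
    tendsto_finsetSum _ fun i _ => (happ i).rpow_const (Or.inl (hx i).ne')
  unfold gini
  split_ifs with hpq
  · have hlog : ContinuousAt (fun y : Fin n → ℝ => ∑ i, y i ^ p * log (y i)) x :=
      tendsto_finsetSum _ fun i _ =>
        ((happ i).rpow_const (Or.inl (hx i).ne')).mul ((happ i).log (hx i).ne')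
    exact (hlog.div (hsum p) (hS p).ne').rexp
  · exact ((hsum p).div (hsum q) (hS q).ne').rpow_const (Or.inl (div_pos (hS p) (hS q)).ne')

end Gini

section Gamma

variable {n : ℕ} [Nonempty (Fin n)] {I : Set ℝ} {r s p q : ℝ}

lemma gini_le_of_mul_le_mul (hw : ((r, s), (p, q)) ∈ Gamma n I) (hIpos : I ⊆ Set.Ioi 0)
    (hIint : I.OrdConnected) {a b m M : ℝ} (ha : a ∈ I) (hb : b ∈ I) (hM : 0 < M)
    (hab : a * M ≤ b * m) {z : Fin n → ℝ} (hz0 : ∀ i, 0 < z i)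
    (hz : ∀ i, m ≤ z i ∧ z i ≤ M) : gini r s z ≤ gini p q z := by
  have hc : 0 < b / M := div_pos (hIpos hb) hM
  have hscaled := hw ((b / M) • z) fun i =>
    hIint.div_mul_mem ha hb (hIpos hb) hM hab (hz i).1 (hz i).2
  rw [gini_smul r s hc hz0, gini_smul p q hc hz0] at hscaled
  exact le_of_mul_le_mul_left hscaled hc

lemma gini_le_of_sInf_lt (hw : ((r, s), (p, q)) ∈ Gamma n I) (hI : I.Nonempty)
    (hIpos : I ⊆ Set.Ioi 0) (hIint : I.OrdConnected) {m M : ℝ} (hM : 0 < M)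
    {z : Fin n → ℝ} (hz0 : ∀ i, 0 < z i) (hz : ∀ i, m ≤ z i ∧ z i ≤ M)
    (hlt : sInf (I * I⁻¹) < m / M) : gini r s z ≤ gini p q z := by
  obtain ⟨_, ⟨a, ha, b, hb, rfl⟩, hab⟩ := exists_lt_of_csInf_lt (hI.mul hI.inv) hlt
  have hb0 : 0 < b := inv_pos.mp (hIpos hb)
  refine gini_le_of_mul_le_mul hw hIpos hIint ha hb hM ?_ hz0 hz
  rw [lt_div_iff₀ hM] at hab
  rw [inv_mul_eq_div, le_div_iff₀ hb0]
  linarith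

lemma gini_le_of_sInf_le (hw : ((r, s), (p, q)) ∈ Gamma n I) (hI : I.Nonempty)
    (hIpos : I ⊆ Set.Ioi 0) (hIint : I.OrdConnected) {m M : ℝ} (hm : 0 < m)
    {z : Fin n → ℝ} (hz : ∀ i, m ≤ z i ∧ z i ≤ M)
    (hle : sInf (I * I⁻¹) ≤ m / M) : gini r s z ≤ gini p q z := by
  have hz0 (i : Fin n) : 0 < z i := hm.trans_le (hz i).1
  obtain ⟨i⟩ := ‹Nonempty (Fin n)›
  rcases ((hz i).1.trans (hz i).2).eq_or_lt with rfl | hmM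
  · obtain ⟨a, ha⟩ := hI
    exact gini_le_of_mul_le_mul hw hIpos hIint ha ha hm le_rfl hz0 hz
  have hshift (ε : ℝ) (hε : 0 < ε) :
      gini r s (fun i => z i + ε) ≤ gini p q (fun i => z i + ε) := by
    refine gini_le_of_sInf_lt hw hI hIpos hIint (m := m + ε) (M := M + ε) (by linarith)
      (fun i => by linarith [hz0 i]) (fun i => ⟨by linarith [hz i], by linarith [hz i]⟩)
      (hle.trans_lt ?_)
    rw [div_lt_div_iff₀ (by linarith) (by linarith)]
    nlinarith
  have hlim : Tendsto (fun ε : ℝ => fun i => z i + ε) (𝓝[>] 0) (𝓝 z) := by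
    have hcont : Continuous fun ε : ℝ => fun i => z i + ε := by fun_prop
    simpa using (hcont.tendsto 0).mono_left nhdsWithin_le_nhds
  exact le_of_tendsto_of_tendsto ((continuousAt_gini r s hz0).tendsto.comp hlim)
    ((continuousAt_gini p q hz0).tendsto.comp hlim) (eventually_nhdsWithin_of_forall hshift)

end Gamma

theorem Gamma_mono_of_inf_ratio_general (I J : Set ℝ) (hI : I.Nonempty)
    (hIpos : I ⊆ Set.Ioi 0) (hJpos : J ⊆ Set.Ioi 0)
    (hIint : I.OrdConnected)
    (h : sInf (I * I⁻¹) ≤ sInf (J * J⁻¹)) (n : ℕ) :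
    Gamma n I ⊆ Gamma n J := by
  rcases n.eq_zero_or_pos with rfl | hn
  · exact fun w hw x _ => hw x finZeroElim
  have : Nonempty (Fin n) := ⟨⟨0, hn⟩⟩
  rintro ⟨⟨r, s⟩, p, q⟩ hw x hx
  obtain ⟨i, -, hi⟩ := exists_mem_eq_inf' univ_nonempty x
  obtain ⟨j, -, hj⟩ := exists_mem_eq_sup' univ_nonempty x
  have hbdd : BddBelow (J * J⁻¹) := by
    refine ⟨0, ?_⟩
    rintro _ ⟨a, ha, b, hb, rfl⟩
    exact (mul_pos (hJpos ha) (inv_pos.mp (hJpos hb))).le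
  have hratio : x i / x j ∈ J * J⁻¹ := Set.mul_mem_mul (hx i) (Set.inv_mem_inv.mpr (hx j))
  exact gini_le_of_sInf_le hw hI hIpos hIint (hJpos (hx i))
    (fun k => ⟨hi ▸ inf'_le x (mem_univ k), hj ▸ le_sup' x (mem_univ k)⟩)
    (h.trans (csInf_le hbdd hratio))

theorem Gamma_mono_of_inf_ratio (I J : Set ℝ) (hI : I.Nonempty) (hJ : J.Nonempty)
    (hIpos : I ⊆ Set.Ioi 0) (hJpos : J ⊆ Set.Ioi 0)
    (hIint : I.OrdConnected) (hJint : J.OrdConnected)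
    (h : sInf (I * I⁻¹) ≤ sInf (J * J⁻¹)) (n : ℕ) (hn : 2 ≤ n) :
    Gamma n I ⊆ Gamma n J :=
  Gamma_mono_of_inf_ratio_general I J hI hIpos hJpos hIint h n
end

section
/- Let I ⊆ ℝ₊ be a nonempty interval with inf(I·I^{-1}) > 0 and n ≥ 2. Then Γ_n(I) is star-shaped with respect to the origin ((0,0),(0,0)): for all t ∈ [0,1] and ((r,s),(p,q)) ∈ Γ_n(I), also ((tr,ts),(tp,tq)) ∈ Γ_n(I). -/
open Real Finset Pointwise

/-!
Rescaling argument: for `x ∈ Iⁿ` with largest entry `M` and `0 < t ≤ 1`, the point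
`y i = M ^ (1 - t) * x i ^ t` lies in `Iⁿ` again (each `y i` is between `x i` and `M`).
Gini means are homogeneous of degree one and satisfy `G_{p,q}(x ^ t) = G_{tp,tq}(x) ^ t`, so the
inequality `G_{r,s}(y) ≤ G_{p,q}(y)` is equivalent to `G_{tr,ts}(x) ≤ G_{tp,tq}(x)`.
-/

section Gini

variable {n : ℕ} {x : Fin n → ℝ}

lemma gini_nonneg (p q : ℝ) (hx : ∀ i, 0 ≤ x i) : 0 ≤ gini p q x := by
  unfold gini
  split_ifs
  · exact (exp_pos _).le
  · exact rpow_nonneg (div_nonneg (sum_nonneg fun i _ => rpow_nonneg (hx i) p)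
      (sum_nonneg fun i _ => rpow_nonneg (hx i) q)) _

lemma gini_const_mul (hn : 0 < n) (p q : ℝ) {c : ℝ} (hc : 0 < c) (hx : ∀ i, 0 < x i) :
    gini p q (fun i => c * x i) = c * gini p q x := by
  have : Nonempty (Fin n) := ⟨⟨0, hn⟩⟩
  have hpow (a : ℝ) (i : Fin n) : (c * x i) ^ a = c ^ a * x i ^ a :=
    mul_rpow hc.le (hx i).le
  have hsum (a : ℝ) : 0 < ∑ i, x i ^ a :=
    sum_pos (fun i _ => rpow_pos_of_pos (hx i) a) univ_nonempty
  unfold gini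
  split_ifs with hpq
  · subst hpq
    have hlog (i : Fin n) : log (c * x i) = log c + log (x i) := log_mul hc.ne' (hx i).ne'
    simp only [hpow, hlog, mul_add, sum_add_distrib, ← sum_mul, mul_assoc, ← mul_sum]
    conv_rhs => rw [← exp_log hc, ← exp_add]
    congr 1
    have := (rpow_pos_of_pos hc p).ne'
    have := (hsum p).ne'
    field_simp
  · have hpq' : p - q ≠ 0 := sub_ne_zero.mpr hpq
    simp only [hpow, ← mul_sum]
    rw [mul_div_mul_comm, ← rpow_sub hc, mul_rpow (rpow_pos_of_pos hc _).le
      (div_pos (hsum p) (hsum q)).le, ← rpow_mul hc.le, mul_one_div_cancel hpq', rpow_one]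

lemma gini_rpow (p q : ℝ) {t : ℝ} (ht : t ≠ 0) (hx : ∀ i, 0 < x i) :
    gini p q (fun i => x i ^ t) = gini (t * p) (t * q) x ^ t := by
  have hpow (a : ℝ) (i : Fin n) : (x i ^ t) ^ a = x i ^ (t * a) := (rpow_mul (hx i).le t a).symm
  unfold gini
  simp only [hpow, mul_right_inj' ht]
  split_ifs with hpq
  · simp only [log_rpow (hx _), mul_left_comm _ t, ← mul_sum, ← exp_mul]
    congr 1
    ring
  · rw [← rpow_mul (div_nonneg (sum_nonneg fun i _ => (rpow_pos_of_pos (hx i) _).le)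
      (sum_nonneg fun i _ => (rpow_pos_of_pos (hx i) _).le))]
    congr 1
    rw [← mul_sub]
    field_simp

end Gini

lemma rpow_one_sub_mul_rpow_mem_Icc {a M t : ℝ} (ha : 0 < a) (haM : a ≤ M)
    (ht : t ∈ Set.Icc (0 : ℝ) 1) :
    M ^ (1 - t) * a ^ t ∈ Set.Icc a M := by
  have hM : 0 < M := ha.trans_le haM
  constructor
  · calc a = a ^ (1 - t) * a ^ t := by rw [← rpow_add ha, sub_add_cancel, rpow_one]
      _ ≤ M ^ (1 - t) * a ^ t := by gcongr; linarith [ht.2]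
  · calc M ^ (1 - t) * a ^ t ≤ M ^ (1 - t) * M ^ t := by gcongr; exact ht.1
      _ = M := by rw [← rpow_add hM, sub_add_cancel, rpow_one]

theorem Gamma_starshaped_general (I : Set ℝ) (hIpos : I ⊆ Set.Ioi 0)
    (hIint : I.OrdConnected) (n : ℕ) (hn : 2 ≤ n)
    (t : ℝ) (ht : t ∈ Set.Icc (0 : ℝ) 1) (w : (ℝ × ℝ) × (ℝ × ℝ)) (hw : w ∈ Gamma n I) :
    t • w ∈ Gamma n I := by
  rcases ht.1.eq_or_lt with rfl | htpos
  · rw [zero_smul]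
    exact fun x _ => le_rfl
  intro x hx
  have hxpos (i : Fin n) : 0 < x i := hIpos (hx i)
  have hn0 : 0 < n := by omega
  obtain ⟨m, -, hmax⟩ := exists_max_image univ x (univ_nonempty_iff.mpr ⟨⟨0, hn0⟩⟩)
  have hc : 0 < x m ^ (1 - t) := rpow_pos_of_pos (hxpos m) _
  have hxt (i : Fin n) : 0 < x i ^ t := rpow_pos_of_pos (hxpos i) t
  have hy := hw (fun i => x m ^ (1 - t) * x i ^ t) fun i =>
    hIint.out (hx i) (hx m) (rpow_one_sub_mul_rpow_mem_Icc (hxpos i) (hmax i (mem_univ i)) ht)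
  have hG (p q : ℝ) : 0 ≤ gini p q x := gini_nonneg p q fun i => (hxpos i).le
  rwa [gini_const_mul hn0 _ _ hc hxt, gini_const_mul hn0 _ _ hc hxt,
    gini_rpow _ _ htpos.ne' hxpos, gini_rpow _ _ htpos.ne' hxpos, mul_le_mul_iff_right₀ hc,
    rpow_le_rpow_iff (hG _ _) (hG _ _) htpos] at hy

theorem Gamma_starshaped (I : Set ℝ) (hI : I.Nonempty) (hIpos : I ⊆ Set.Ioi 0)
    (hIint : I.OrdConnected) (h0 : 0 < sInf (I * I⁻¹)) (n : ℕ) (hn : 2 ≤ n)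
    (t : ℝ) (ht : t ∈ Set.Icc (0 : ℝ) 1) (w : (ℝ × ℝ) × (ℝ × ℝ)) (hw : w ∈ Gamma n I) :
    t • w ∈ Gamma n I :=
  Gamma_starshaped_general I hIpos hIint n hn t ht w hw
end
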